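/- Let U ⊆ ℝ³ be open and let B, ξ : U → ℝ³ be smooth vector fields satisfying div B = 0, div ξ = 0, and curl(B × ξ) = 0 on U (all operations Euclidean). Then B · ( ∇(B · ξ) − ξ × curl B ) = ξ · ∇(|B|²) on U. In particular, at points where B ≠ 0, the quasisymmetry condition ξ · ∇|B| = 0 holds if and only if the component of ξ × curl B − ∇(B · ξ) along B vanishes. -/

import Mathlib

noncomputable section

/-- Points of `ℝ³`. -/
abbrev Pt : Type := Fin 3 → ℝ

/-- Vector fields on `ℝ³`. -/
abbrev VF : Type := Pt → Pt

/-- A (matrix-valued) metric on `ℝ³`. -/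
abbrev Met3 : Type := Pt → Matrix (Fin 3) (Fin 3) ℝ

/-- Partial derivative `∂ᵢ f` in the standard coordinates. -/
def pd (i : Fin 3) (f : Pt → ℝ) (x : Pt) : ℝ := fderiv ℝ f x (Pi.single i 1)

/-- The Levi-Civita symbol `ε_{ijk}`. -/
def eps (i j k : Fin 3) : ℝ :=
  ((j.val : ℝ) - (i.val : ℝ)) * ((k.val : ℝ) - (i.val : ℝ)) * ((k.val : ℝ) - (j.val : ℝ)) / 2

/-- `g` is a smooth Riemannian metric on `U`: smooth coefficients, symmetric
positive-definite at every point of `U`. -/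
def SmoothMetricOn (g : Met3) (U : Set Pt) : Prop :=
  (∀ i j, ContDiffOn ℝ (⊤ : ℕ∞) (fun x => g x i j) U) ∧ (∀ x ∈ U, (g x).PosDef)

/-- `√|g|`, square root of the determinant of the metric. -/
def sdet (g : Met3) (x : Pt) : ℝ := Real.sqrt (g x).det

/-- Metric dot product `X ·_g Y = g_{ij} X^i Y^j`. -/
def gdot (g : Met3) (X Y : VF) (x : Pt) : ℝ := ∑ i, ∑ j, g x i j * X x i * Y x j

/-- `|X|²_g`. -/
def gnormSq (g : Met3) (X : VF) (x : Pt) : ℝ := gdot g X X x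

/-- Metric gradient `(∇_g f)^i = g^{ij} ∂_j f`. -/
def ggrad (g : Met3) (f : Pt → ℝ) : VF := fun x i => ∑ j, (g x)⁻¹ i j * pd j f x

/-- Metric cross product `(X ×_g Y)^k = √|g| g^{kℓ} ε_{ijℓ} X^i Y^j`. -/
def gcross (g : Met3) (X Y : VF) : VF :=
  fun x k => sdet g x * ∑ l, ∑ i, ∑ j, (g x)⁻¹ k l * eps i j l * X x i * Y x j

/-- Metric divergence `div_g X = |g|^{-1/2} ∂_i(√|g| X^i)`. -/
def gdiv (g : Met3) (X : VF) (x : Pt) : ℝ :=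
  (sdet g x)⁻¹ * ∑ i, pd i (fun y => sdet g y * X y i) x

/-- Metric curl `(curl_g X)^m = √|g| g^{mn} g^{ik} g^{jℓ} ε_{kℓn} ∂_i(g_{jp}X^p)`. -/
def gcurl (g : Met3) (X : VF) : VF :=
  fun x m => sdet g x * ∑ n, ∑ i, ∑ k, ∑ j, ∑ l,
    (g x)⁻¹ m n * (g x)⁻¹ i k * (g x)⁻¹ j l * eps k l n *
      pd i (fun y => ∑ p, g y j p * X y p) x

/-- Christoffel symbols `Γ^k_{ij}`. -/
def christoffel (g : Met3) (x : Pt) (k i j : Fin 3) : ℝ :=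
  (1 / 2) * ∑ l, (g x)⁻¹ k l *
    (pd i (fun y => g y j l) x + pd j (fun y => g y i l) x - pd l (fun y => g y i j) x)

/-- Covariant derivative `(∇_X Y)^i = X^j ∂_j Y^i + Γ^i_{jk} X^j Y^k`. -/
def covD (g : Met3) (X Y : VF) : VF :=
  fun x i => (∑ j, X x j * pd j (fun y => Y y i) x)
    + ∑ j, ∑ k, christoffel g x i j k * X x j * Y x k

/-- Lie derivative of a vector field, `(L_X Y)^i = X^j ∂_j Y^i − Y^j ∂_j X^i`. -/
def lieVF (X Y : VF) : VF :=
  fun x i => (∑ j, X x j * pd j (fun y => Y y i) x) - ∑ j, Y x j * pd j (fun y => X y i) x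

/-- Deformation tensor `(L_X g)_{ij} = ∂_i(g_{jℓ}X^ℓ) + ∂_j(g_{iℓ}X^ℓ) − 2Γ^k_{ij} g_{kℓ}X^ℓ`. -/
def lieMet (g : Met3) (X : VF) (x : Pt) (i j : Fin 3) : ℝ :=
  pd i (fun y => ∑ l, g y j l * X y l) x + pd j (fun y => ∑ l, g y i l * X y l) x
    - 2 * ∑ k, ∑ l, christoffel g x k i j * g x k l * X x l

/-- Pairing `(L_X g)(A, B) = (L_X g)_{ij} A^i B^j`. -/
def lieMetPair (g : Met3) (X A B : VF) (x : Pt) : ℝ :=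
  ∑ i, ∑ j, lieMet g X x i j * A x i * B x j

/-- `ξ` is a `g`-Killing field on `U`. -/
def IsKillingOn (g : Met3) (ξ : VF) (U : Set Pt) : Prop :=
  ∀ x ∈ U, ∀ i j, lieMet g ξ x i j = 0

/-- Euclidean dot product. -/
def edot (X Y : VF) (x : Pt) : ℝ := ∑ i, X x i * Y x i

/-- Euclidean gradient. -/
def egrad (f : Pt → ℝ) : VF := fun x i => pd i f x

/-- Euclidean cross product. -/
def ecross (X Y : VF) : VF := fun x k => ∑ i, ∑ j, eps i j k * X x i * Y x j

/-- Euclidean divergence. -/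
def ediv (X : VF) (x : Pt) : ℝ := ∑ i, pd i (fun y => X y i) x

/-- Euclidean curl. -/
def ecurl (X : VF) : VF := fun x m => ∑ i, ∑ j, eps i j m * pd i (fun y => X y j) x

/-- Euclidean deformation tensor pairing `(L_ξ δ)(A,B) = A^i (∂_i ξ^j + ∂_j ξ^i) B^j`. -/
def lieEuclPair (ξ A B : VF) (x : Pt) : ℝ :=
  ∑ i, ∑ j, A x i * (pd i (fun y => ξ y j) x + pd j (fun y => ξ y i) x) * B x j

/-- The magnetic field ansatz `B_g = |ξ|_g^{-2} (C(ψ) ξ + √|g| (ξ ×_g ∇_g ψ))`. -/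
def Bg (g : Met3) (ξ : VF) (C : ℝ → ℝ) (ψ : Pt → ℝ) : VF :=
  fun x i => (gnormSq g ξ x)⁻¹ * (C (ψ x) * ξ x i + sdet g x * gcross g ξ (ggrad g ψ) x i)


section Statement18Aux

lemma pd_mul' {f g : Pt → ℝ} {x : Pt} (hf : DifferentiableAt ℝ f x)
    (hg : DifferentiableAt ℝ g x) (i : Fin 3) :
    pd i (fun y => f y * g y) x = pd i f x * g x + f x * pd i g x := by
  unfold pd; rw [fderiv_fun_mul hf hg]; simp; ring

lemma pd_sum' {ι : Type*} (s : Finset ι) {F : ι → Pt → ℝ} {x : Pt}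
    (h : ∀ j ∈ s, DifferentiableAt ℝ (F j) x) (i : Fin 3) :
    pd i (fun y => ∑ j ∈ s, F j y) x = ∑ j ∈ s, pd i (F j) x := by
  unfold pd; rw [fderiv_fun_sum h]; simp

lemma pd_trip {f g : Pt → ℝ} {x : Pt} (c : ℝ) (hf : DifferentiableAt ℝ f x)
    (hg : DifferentiableAt ℝ g x) (i : Fin 3) :
    pd i (fun y => c * f y * g y) x = c * (pd i f x * g x + f x * pd i g x) := by
  have h1 : (fun y => c * f y * g y) = fun y => c * (f y * g y) := by
    funext y; ring
  rw [h1]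
  unfold pd
  rw [fderiv_const_mul (hf.fun_mul hg)]
  have := pd_mul' hf hg i
  unfold pd at this
  simp only [ContinuousLinearMap.smul_apply, smul_eq_mul, this]

lemma key18 (b s : Fin 3 → ℝ) (db ds : Fin 3 → Fin 3 → ℝ)
    (hdb : ∑ i, db i i = 0) (hds : ∑ i, ds i i = 0)
    (hc : ∀ m, (∑ i, ∑ j, eps i j m * (∑ a, ∑ c, eps a c j * (db i a * s c + b a * ds i c))) = 0) :
    (∑ k, b k * ((∑ i, (db k i * s i + b i * ds k i))
        - ∑ a, ∑ c, eps a c k * s a * (∑ p, ∑ q, eps p q c * db p q)))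
      = ∑ k, s k * (∑ i, (db k i * b i + b i * db k i)) := by
  have h0 := hc 0; have h1 := hc 1; have h2 := hc 2
  simp only [Fin.sum_univ_three, eps] at h0 h1 h2 hdb hds ⊢
  norm_num at h0 h1 h2 ⊢
  linear_combination (-(b 0)) * h0 + (-(b 1)) * h1 + (-(b 2)) * h2
    + (b 0 * b 0 + b 1 * b 1 + b 2 * b 2) * hds
    - (b 0 * s 0 + b 1 * s 1 + b 2 * s 2) * hdb

end Statement18Aux

/-- `B · (∇(B·ξ) − ξ × curl B) = ξ · ∇(|B|²)` for divergence-free `B, ξ`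
with `curl(B × ξ) = 0`. -/
theorem statement18 (U : Set Pt) (hU : IsOpen U)
    (B ξ : VF) (hB : ContDiffOn ℝ (⊤ : ℕ∞) B U) (hξ : ContDiffOn ℝ (⊤ : ℕ∞) ξ U)
    (hdivB : ∀ x ∈ U, ediv B x = 0) (hdivξ : ∀ x ∈ U, ediv ξ x = 0)
    (hcurl : ∀ x ∈ U, ∀ m, ecurl (ecross B ξ) x m = 0) :
    ∀ x ∈ U,
      edot B (fun y i => egrad (edot B ξ) y i - ecross ξ (ecurl B) y i) x
        = edot ξ (egrad (edot B B)) x ∧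
      (B x ≠ 0 →
        (edot ξ (egrad (fun y => Real.sqrt (edot B B y))) x = 0 ↔
          edot B (fun y i => ecross ξ (ecurl B) y i - egrad (edot B ξ) y i) x = 0))  := by
  intro x hx
  have hBat : ContDiffAt ℝ (⊤ : ℕ∞) B x := hB.contDiffAt (hU.mem_nhds hx)
  have hXat : ContDiffAt ℝ (⊤ : ℕ∞) ξ x := hξ.contDiffAt (hU.mem_nhds hx)
  have hBi : ∀ i, DifferentiableAt ℝ (fun y => B y i) x :=
    fun i => (contDiffAt_pi.mp hBat i).differentiableAt (by simp)
  have hXi : ∀ i, DifferentiableAt ℝ (fun y => ξ y i) x :=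
    fun i => (contDiffAt_pi.mp hXat i).differentiableAt (by simp)
  -- expansion of derivative of cross product components
  have hdiff3 : ∀ (a c j : Fin 3), DifferentiableAt ℝ (fun y => eps a c j * B y a * ξ y c) x :=
    fun a c j => ((hBi a).const_mul _).mul (hXi c)
  have hcross : ∀ i j : Fin 3, pd i (fun y => ecross B ξ y j) x
      = ∑ a, ∑ c, eps a c j * (pd i (fun y => B y a) x * ξ x c
          + B x a * pd i (fun y => ξ y c) x) := by
    intro i j
    show pd i (fun y => ∑ a, ∑ c, eps a c j * B y a * ξ y c) x = _
    rw [pd_sum' Finset.univ (fun a _ => DifferentiableAt.fun_sum fun c _ => hdiff3 a c j) i]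
    refine Finset.sum_congr rfl fun a _ => ?_
    rw [pd_sum' Finset.univ (fun c _ => hdiff3 a c j) i]
    exact Finset.sum_congr rfl fun c _ => pd_trip _ (hBi a) (hXi c) i
  have hc2 : ∀ m, (∑ i, ∑ j, eps i j m * (∑ a, ∑ c, eps a c j *
      (pd i (fun y => B y a) x * ξ x c + B x a * pd i (fun y => ξ y c) x))) = 0 := by
    intro m
    have h : (∑ i, ∑ j, eps i j m * pd i (fun y => ecross B ξ y j) x) = 0 := hcurl x hx m
    simp only [hcross] at h
    exact h
  have hdb : (∑ i, pd i (fun y => B y i) x) = 0 := hdivB x hx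
  have hds : (∑ i, pd i (fun y => ξ y i) x) = 0 := hdivξ x hx
  have hgradBs : ∀ k : Fin 3, pd k (edot B ξ) x
      = ∑ i, (pd k (fun y => B y i) x * ξ x i + B x i * pd k (fun y => ξ y i) x) := by
    intro k
    show pd k (fun y => ∑ i, B y i * ξ y i) x = _
    rw [pd_sum' Finset.univ (fun i _ => (hBi i).fun_mul (hXi i)) k]
    exact Finset.sum_congr rfl fun i _ => pd_mul' (hBi i) (hXi i) k
  have hgradBB : ∀ k : Fin 3, pd k (edot B B) x
      = ∑ i, (pd k (fun y => B y i) x * B x i + B x i * pd k (fun y => B y i) x) := by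
    intro k
    show pd k (fun y => ∑ i, B y i * B y i) x = _
    rw [pd_sum' Finset.univ (fun i _ => (hBi i).fun_mul (hBi i)) k]
    exact Finset.sum_congr rfl fun i _ => pd_mul' (hBi i) (hBi i) k
  have part1 : edot B (fun y i => egrad (edot B ξ) y i - ecross ξ (ecurl B) y i) x
      = edot ξ (egrad (edot B B)) x := by
    show (∑ k, B x k * (pd k (edot B ξ) x - ecross ξ (ecurl B) x k))
        = ∑ k, ξ x k * pd k (edot B B) x
    simp only [hgradBs, hgradBB]
    exact key18 (B x) (ξ x) (fun i j => pd i (fun y => B y j) x)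
      (fun i j => pd i (fun y => ξ y j) x) hdb hds hc2
  refine ⟨part1, fun hBne => ?_⟩
  -- positivity of |B|^2
  obtain ⟨i0, hi0⟩ := Function.ne_iff.mp hBne
  have hpos : 0 < edot B B x := by
    show 0 < ∑ i, B x i * B x i
    exact Finset.sum_pos' (fun j _ => mul_self_nonneg _)
      ⟨i0, Finset.mem_univ i0, mul_self_pos.mpr hi0⟩
  have hfB : DifferentiableAt ℝ (edot B B) x := by
    show DifferentiableAt ℝ (fun y => ∑ i, B y i * B y i) x
    exact DifferentiableAt.fun_sum fun i _ => (hBi i).mul (hBi i)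
  have hsq : HasFDerivAt (fun y => Real.sqrt (edot B B y))
      ((1 / (2 * Real.sqrt (edot B B x))) • (fderiv ℝ (edot B B) x)) x :=
    (Real.hasDerivAt_sqrt (ne_of_gt hpos)).comp_hasFDerivAt x hfB.hasFDerivAt
  have hsqrt_pd : ∀ k : Fin 3, pd k (fun y => Real.sqrt (edot B B y)) x
      = (1 / (2 * Real.sqrt (edot B B x))) * pd k (edot B B) x := by
    intro k
    unfold pd
    rw [hsq.fderiv]
    simp
  have hR2 : edot ξ (egrad (fun y => Real.sqrt (edot B B y))) x
      = (1 / (2 * Real.sqrt (edot B B x))) * edot ξ (egrad (edot B B)) x := by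
    show (∑ k, ξ x k * pd k (fun y => Real.sqrt (edot B B y)) x)
        = (1 / (2 * Real.sqrt (edot B B x))) * ∑ k, ξ x k * pd k (edot B B) x
    simp only [hsqrt_pd]
    rw [Finset.mul_sum]
    exact Finset.sum_congr rfl fun k _ => by ring
  have hneg : edot B (fun y i => ecross ξ (ecurl B) y i - egrad (edot B ξ) y i) x
      = - edot B (fun y i => egrad (edot B ξ) y i - ecross ξ (ecurl B) y i) x := by
    show (∑ k, B x k * (ecross ξ (ecurl B) x k - pd k (edot B ξ) x))
        = - ∑ k, B x k * (pd k (edot B ξ) x - ecross ξ (ecurl B) x k)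
    rw [← Finset.sum_neg_distrib]
    exact Finset.sum_congr rfl fun k _ => by ring
  have hcne : (1 / (2 * Real.sqrt (edot B B x))) ≠ 0 := by
    have := Real.sqrt_pos.mpr hpos
    positivity
  rw [hR2, hneg, ← part1]
  rw [mul_eq_zero, neg_eq_zero, or_iff_right hcne]
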